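/- arXiv:1911.08398 — 2 statements merged into one kernel-verified Lean document; each statement's English description precedes it below -/
import Mathlib

section
/- Let K₁ > 0 and α₁ > 0 be constants and define q(x) = K₁ e^{-α₁ x} - α₁ K₁ x e^{-α₁ x} - 1 for x ≥ 0. If q(0) < 0 (i.e. K₁ < 1) then q has no zero on (0,∞); if q(0) > 0 (i.e. K₁ > 1) then q has exactly one zero x₁ on (0,∞), and moreover x₁ ∈ (0, 2/α₁). -/
open Real

theorem ricker_q_zeros (K₁ α₁ : ℝ) (hK : 0 < K₁) (hα : 0 < α₁)
    (q : ℝ → ℝ)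
    (hq : ∀ x, q x = K₁ * exp (-α₁ * x) - α₁ * K₁ * x * exp (-α₁ * x) - 1) :
    (q 0 < 0 → ∀ x > 0, q x ≠ 0) ∧
    (0 < q 0 → ∃! x : ℝ, 0 < x ∧ q x = 0) ∧
    (0 < q 0 → ∀ x : ℝ, 0 < x → q x = 0 → x < 2 / α₁) := by
  have hq0 : q 0 = K₁ - 1 := by rw [hq]; simp
  have hzero_lt : ∀ x : ℝ, q x = 0 → x < 1 / α₁ := by
    intro x hx
    rw [hq x] at hx
    have hE := exp_pos (-α₁ * x)
    have h1 : 0 < 1 - α₁ * x := by nlinarith [mul_pos hK hE]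
    rw [lt_div_iff₀ hα]
    nlinarith
  have hAnti : StrictAntiOn q (Set.Icc 0 (1 / α₁)) := by
    intro a ha b hb hab
    rw [hq a, hq b]
    have hEa := exp_pos (-α₁ * a)
    have hEb := exp_pos (-α₁ * b)
    have hlt : exp (-α₁ * b) < exp (-α₁ * a) := by
      apply exp_lt_exp.mpr; nlinarith
    have hb1 : α₁ * b ≤ 1 := by
      have := hb.2
      rw [le_div_iff₀ hα] at this
      nlinarith
    have ha1 : α₁ * a < 1 := by nlinarith
    have key : exp (-α₁ * b) * (1 - α₁ * b) < exp (-α₁ * a) * (1 - α₁ * a) := by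
      nlinarith [mul_pos hEa (show (0:ℝ) < α₁ * b - α₁ * a by nlinarith [mul_lt_mul_of_pos_left hab hα]),
        mul_nonneg (by linarith : (0:ℝ) ≤ exp (-α₁ * a) - exp (-α₁ * b))
          (by linarith : (0:ℝ) ≤ 1 - α₁ * b)]
    nlinarith [mul_lt_mul_of_pos_left key hK]
  refine ⟨?_, ?_, ?_⟩
  · intro h0 x hx hxz
    have hK1 : K₁ < 1 := by linarith
    rw [hq x] at hxz
    have hE := exp_pos (-α₁ * x)
    have hE1 : exp (-α₁ * x) < 1 := by
      rw [exp_lt_one_iff]; nlinarith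
    nlinarith [mul_pos (mul_pos (mul_pos hα hK) hx) hE, mul_pos hK hE]
  · intro h0
    have hcont : Continuous q := by
      have hfe : q = fun x => K₁ * exp (-α₁ * x) - α₁ * K₁ * x * exp (-α₁ * x) - 1 :=
        funext hq
      rw [hfe]; continuity
    have hq1 : q (1 / α₁) = -1 := by
      rw [hq]
      have : -α₁ * (1 / α₁) = -1 := by field_simp
      rw [this]
      field_simp
      ring
    have h01 : (0:ℝ) ≤ 1 / α₁ := by positivity
    have hmem : (0:ℝ) ∈ Set.Icc (q (1 / α₁)) (q 0) := by
      rw [hq1]; exact ⟨by norm_num, le_of_lt h0⟩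
    obtain ⟨c, hc, hqc⟩ := intermediate_value_Icc' h01 hcont.continuousOn hmem
    have hcpos : 0 < c := by
      rcases lt_or_eq_of_le hc.1 with h | h
      · exact h
      · exfalso; rw [← h] at hqc; linarith
    refine ⟨c, ⟨hcpos, hqc⟩, ?_⟩
    rintro y ⟨hy, hqy⟩
    exact hAnti.injOn ⟨le_of_lt hy, le_of_lt (hzero_lt y hqy)⟩ ⟨hc.1, hc.2⟩
      (by rw [hqy, hqc])
  · intro _ x hx hqx
    have h1 := hzero_lt x hqx
    have h2 : (1:ℝ) / α₁ < 2 / α₁ := by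
      rw [div_lt_div_iff₀ hα hα]; nlinarith
    linarith
end

section
/- For constants ρ̄ > 0 and ᾱ > 0, define H(θ) = θ(ρ̄ + ln(1-θ)) / ((1-θ) ᾱ) on (0, 1 - e^{-ρ̄}). Then there exists a unique θ* ∈ (0, 1 - e^{-ρ̄}) with ρ̄ - θ* + ln(1 - θ*) = 0, θ* is the unique critical point of H, H''(θ*) = (θ* - 2)/(ᾱ(1-θ*)³) < 0, and H(θ*) = (θ*)² / ((1-θ*) ᾱ). -/
open Real

private lemma g_hasDerivAt (ρ x : ℝ) (hx : x < 1) :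
    HasDerivAt (fun θ : ℝ => ρ - θ + log (1 - θ)) (-1 + -(1 - x)⁻¹) x := by
  have h1 : (1 : ℝ) - x ≠ 0 := by linarith
  have hlog : HasDerivAt (fun θ : ℝ => log (1 - θ)) ((1 - x)⁻¹ * (-1)) x := by
    exact (Real.hasDerivAt_log h1).comp x (((hasDerivAt_id x).const_sub 1))
  have := ((hasDerivAt_id x).const_sub ρ)
  have h2 : HasDerivAt (fun θ : ℝ => ρ - θ) (-1 : ℝ) x := (hasDerivAt_id x).const_sub ρ
  have := h2.add hlog
  refine this.congr_deriv ?_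
  ring

private lemma g_strictAntiOn (ρ : ℝ) :
    StrictAntiOn (fun θ : ℝ => ρ - θ + log (1 - θ)) (Set.Iio 1) := by
  apply strictAntiOn_of_deriv_neg (convex_Iio 1)
  · apply ContinuousOn.add
    · exact (continuous_const.sub continuous_id).continuousOn
    · apply ContinuousOn.log ((continuous_const.sub continuous_id).continuousOn)
      intro x hx
      simp only [Set.mem_Iio] at hx
      intro h; simp at h; linarith
  · intro x hx
    rw [interior_Iio] at hx
    rw [(g_hasDerivAt ρ x hx).deriv]
    have : (0:ℝ) < (1 - x)⁻¹ := by
      apply inv_pos.mpr; linarith [Set.mem_Iio.mp hx]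
    linarith

private lemma H_hasDerivAt (ρ α : ℝ) (hα : 0 < α) (H : ℝ → ℝ)
    (hH : ∀ θ, H θ = θ * (ρ + log (1 - θ)) / ((1 - θ) * α)) (x : ℝ) (hx : x < 1) :
    HasDerivAt H ((ρ - x + log (1 - x)) / (α * (1 - x) ^ 2)) x := by
  have h1 : (1 : ℝ) - x ≠ 0 := by linarith
  have hα' : α ≠ 0 := ne_of_gt hα
  have hlog : HasDerivAt (fun θ : ℝ => log (1 - θ)) ((1 - x)⁻¹ * (-1)) x :=
    (Real.hasDerivAt_log h1).comp x (((hasDerivAt_id x).const_sub 1))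
  have hsum : HasDerivAt (fun θ : ℝ => ρ + log (1 - θ)) ((1 - x)⁻¹ * (-1)) x := by
    exact ((hasDerivAt_const x ρ).add hlog).congr_deriv (by ring)
  have hnum : HasDerivAt (fun θ : ℝ => θ * (ρ + log (1 - θ)))
      (1 * (ρ + log (1 - x)) + x * ((1 - x)⁻¹ * (-1))) x :=
    (hasDerivAt_id x).mul hsum
  have hden : HasDerivAt (fun θ : ℝ => (1 - θ) * α) (-1 * α) x :=
    ((hasDerivAt_id x).const_sub 1).mul_const α
  have hd : (1 - x) * α ≠ 0 := mul_ne_zero h1 hα'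
  have := hnum.div hden hd
  have hfun : H = fun θ => θ * (ρ + log (1 - θ)) / ((1 - θ) * α) := funext hH
  rw [hfun]
  refine this.congr_deriv ?_
  field_simp
  ring

theorem optimal_constant_effort_ricker (ρ α : ℝ) (hρ : 0 < ρ) (hα : 0 < α)
    (H : ℝ → ℝ)
    (hH : ∀ θ, H θ = θ * (ρ + log (1 - θ)) / ((1 - θ) * α)) :
    ∃ θs : ℝ, θs ∈ Set.Ioo 0 (1 - exp (-ρ)) ∧
      ρ - θs + log (1 - θs) = 0 ∧
      (∀ θ ∈ Set.Ioo (0:ℝ) (1 - exp (-ρ)), ρ - θ + log (1 - θ) = 0 → θ = θs) ∧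
      deriv H θs = 0 ∧
      (∀ θ ∈ Set.Ioo (0:ℝ) (1 - exp (-ρ)), deriv H θ = 0 → θ = θs) ∧
      iteratedDeriv 2 H θs = (θs - 2) / (α * (1 - θs) ^ 3) ∧
      (θs - 2) / (α * (1 - θs) ^ 3) < 0 ∧
      H θs = θs ^ 2 / ((1 - θs) * α) := by
  set b : ℝ := 1 - exp (-ρ) with hb
  have hexp : exp (-ρ) < 1 := exp_lt_one_iff.mpr (by linarith)
  have hb0 : 0 < b := by simp [hb]; linarith
  have hb1 : b < 1 := by
    have := exp_pos (-ρ); simp [hb]; linarith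
  set g : ℝ → ℝ := fun θ => ρ - θ + log (1 - θ) with hg
  have hcont : ContinuousOn g (Set.Icc 0 b) := by
    apply ContinuousOn.add
    · exact (continuous_const.sub continuous_id).continuousOn
    · apply ContinuousOn.log ((continuous_const.sub continuous_id).continuousOn)
      intro x hx
      rcases hx with ⟨_, hx2⟩
      intro h; simp at h; linarith
  have hg0 : g 0 = ρ := by simp [hg]
  have hgb : g b = -(1 - exp (-ρ)) := by
    simp only [hg, hb]
    rw [show (1 : ℝ) - (1 - exp (-ρ)) = exp (-ρ) by ring, log_exp]
    ring
  have hmem : (0:ℝ) ∈ Set.Ioo (g b) (g 0) := by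
    rw [hg0, hgb]; constructor <;> linarith
  obtain ⟨θs, hθs_mem, hθs_eq⟩ := intermediate_value_Ioo' (le_of_lt hb0) hcont hmem
  have hzero : ρ - θs + log (1 - θs) = 0 := hθs_eq
  have hθs1 : θs < 1 := lt_trans hθs_mem.2 hb1
  have h1θs : (0:ℝ) < 1 - θs := by linarith
  have hα' : α ≠ 0 := ne_of_gt hα
  have huniq : ∀ θ ∈ Set.Ioo (0:ℝ) b, g θ = 0 → θ = θs := by
    intro θ hθ hθeq
    have hθ1 : θ ∈ Set.Iio (1:ℝ) := lt_trans hθ.2 hb1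
    have hθs1' : θs ∈ Set.Iio (1:ℝ) := hθs1
    have hθeq' : ρ - θ + log (1 - θ) = 0 := hθeq
    by_contra hne
    rcases lt_or_gt_of_ne hne with h | h
    · have h2 : ρ - θs + log (1 - θs) < ρ - θ + log (1 - θ) := g_strictAntiOn ρ hθ1 hθs1' h
      linarith
    · have h2 : ρ - θ + log (1 - θ) < ρ - θs + log (1 - θs) := g_strictAntiOn ρ hθs1' hθ1 h
      linarith
  have hderiv : ∀ x : ℝ, x < 1 → deriv H x = (ρ - x + log (1 - x)) / (α * (1 - x) ^ 2) :=
    fun x hx => (H_hasDerivAt ρ α hα H hH x hx).deriv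
  have hderiv_θs : deriv H θs = 0 := by
    rw [hderiv θs hθs1, hzero]; simp
  refine ⟨θs, hθs_mem, hθs_eq, huniq, hderiv_θs, ?_, ?_, ?_, ?_⟩
  · -- uniqueness of critical point
    intro θ hθ hd
    have hθ1 : θ < 1 := lt_trans hθ.2 hb1
    rw [hderiv θ hθ1] at hd
    have hden : α * (1 - θ) ^ 2 ≠ 0 := mul_ne_zero hα' (pow_ne_zero 2 (by linarith))
    have : ρ - θ + log (1 - θ) = 0 := by
      exact (div_eq_zero_iff.mp hd).resolve_right hden
    exact huniq θ hθ this
  · -- second derivative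
    have hEq : deriv H =ᶠ[nhds θs] fun x => (ρ - x + log (1 - x)) / (α * (1 - x) ^ 2) := by
      filter_upwards [Iio_mem_nhds hθs1] with x hx
      exact hderiv x hx
    rw [iteratedDeriv_succ, iteratedDeriv_one]
    rw [hEq.deriv_eq]
    have h1 : (1:ℝ) - θs ≠ 0 := ne_of_gt h1θs
    have hnum : HasDerivAt (fun x : ℝ => ρ - x + log (1 - x)) (-1 + -(1 - θs)⁻¹) θs :=
      g_hasDerivAt ρ θs hθs1
    have hden : HasDerivAt (fun x : ℝ => α * (1 - x) ^ 2) (α * (2 * (1 - θs) * (-1))) θs := by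
      have : HasDerivAt (fun x : ℝ => (1 - x) ^ 2) (2 * (1 - θs) ^ 1 * (-1)) θs :=
        (((hasDerivAt_id θs).const_sub 1)).pow 2
      simpa [pow_one, mul_comm, mul_assoc, mul_left_comm] using this.const_mul α
    have hdne : α * (1 - θs) ^ 2 ≠ 0 := by positivity
    have hdiv := hnum.div hden hdne
    rw [show deriv (fun x : ℝ => (ρ - x + log (1 - x)) / (α * (1 - x) ^ 2)) θs = _ from hdiv.deriv]
    have hlogθs : log (1 - θs) = θs - ρ := by linarith [hzero]
    rw [hlogθs]
    field_simp
    ring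
  · -- negativity
    apply div_neg_of_neg_of_pos
    · linarith
    · positivity
  · rw [hH θs]
    have hlogθs : log (1 - θs) = θs - ρ := by linarith [hzero]
    rw [hlogθs]
    have h1 : (1:ℝ) - θs ≠ 0 := ne_of_gt h1θs
    field_simp
    ring
end
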